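/- Let S be a commutative semiring and H a Hopf S-semialgebra. Then H admits a total left integral (t ∈ Hom_S(H,S) with Σ h_1·t(h_2) = t(h)·1_H for all h ∈ H and t(1_H) = 1_S) if and only if H is coseparable, i.e., there exists an S-linear map δ : H ⊗_S H → S such that δ(Δ(h)) = ε(h) for all h ∈ H, and Σ h_1·δ(h_2 ⊗ k) = Σ δ(h ⊗ k_1)·k_2 for all h, k ∈ H. -/

import Mathlib

/-!
For a total left integral `t`, the form `δ (h ⊗ k) = t (h 𝔞(k))` is coseparable. Its right
contraction `Σ δ(h ⊗ k₁) k₂` is `t ⊗ id` applied to `Σ h 𝔞(k₁) ⊗ k₂`, the inverse of the Galois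
map `h ⊗ k ↦ Σ h k₁ ⊗ k₂`. Its left contraction `Σ h₁ δ(h₂ ⊗ k)` sends the Galois image of `h ⊗ k`
to `Σ h₁ t(h₂) k = t(h) k`, because `Σ k₁ ⊗ k₂ 𝔞(k₃) = k ⊗ 1`; as the Galois map is surjective, the
two contractions agree. Conversely, for coseparable `δ`, the functional `h ↦ δ (h ⊗ 1)` is a left
integral by colinearity at `k = 1`, and it is total since `δ (1 ⊗ 1) = δ (Δ 1) = ε 1 = 1`.
-/

open TensorProduct Coalgebra HopfAlgebra LinearMap

namespace LinearMap

variable {R C : Type*} [CommSemiring R] [AddCommMonoid C] [Module R C] [CoalgebraStruct R C]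

def comulContractLeft (δ : C ⊗[R] C →ₗ[R] R) : C ⊗[R] C →ₗ[R] C :=
  (TensorProduct.rid R C).toLinearMap ∘ₗ lTensor C δ ∘ₗ
    (TensorProduct.assoc R C C C).toLinearMap ∘ₗ rTensor C comul

def comulContractRight (δ : C ⊗[R] C →ₗ[R] R) : C ⊗[R] C →ₗ[R] C :=
  (TensorProduct.lid R C).toLinearMap ∘ₗ rTensor C δ ∘ₗ
    (TensorProduct.assoc R C C C).symm.toLinearMap ∘ₗ lTensor C comul

lemma comulContractLeft_tmul (δ : C ⊗[R] C →ₗ[R] R) (h k : C) :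
    comulContractLeft δ (h ⊗ₜ k) =
      TensorProduct.rid R C (lTensor C (δ ∘ₗ (TensorProduct.mk R C C).flip k) (comul h)) := by
  simp only [comulContractLeft, coe_comp, Function.comp_apply, LinearEquiv.coe_coe, rTensor_tmul]
  induction comul (R := R) h using TensorProduct.induction_on with
  | zero => simp
  | tmul x y => simp
  | add x y hx hy => simp only [add_tmul, map_add, hx, hy]

lemma comulContractRight_tmul (δ : C ⊗[R] C →ₗ[R] R) (h k : C) :
    comulContractRight δ (h ⊗ₜ k) =
      TensorProduct.lid R C (rTensor C (δ ∘ₗ TensorProduct.mk R C C h) (comul k)) := by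
  simp only [comulContractRight, coe_comp, Function.comp_apply, LinearEquiv.coe_coe, lTensor_tmul]
  induction comul (R := R) k using TensorProduct.induction_on with
  | zero => simp
  | tmul x y => simp
  | add x y hx hy => simp only [tmul_add, map_add, hx, hy]

section Algebra

variable {R A : Type*} [CommSemiring R] [Semiring A] [Algebra R A]

lemma rid_lTensor_mul_tmul_one (t : A →ₗ[R] R) (x : A ⊗[R] A) (k : A) :
    TensorProduct.rid R A (lTensor A t (x * (k ⊗ₜ 1))) =
      TensorProduct.rid R A (lTensor A t x) * k := by
  induction x using TensorProduct.induction_on with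
  | zero => simp
  | tmul a b => simp
  | add x y hx hy => simp only [add_mul, map_add, hx, hy]

end Algebra

end LinearMap

namespace HopfAlgebra

section Bialgebra

variable {R A : Type*} [CommSemiring R] [Semiring A] [Bialgebra R A]

variable (R A) in
def galoisMap : A ⊗[R] A →ₗ[R] A ⊗[R] A :=
  rTensor A (mul' R A) ∘ₗ (TensorProduct.assoc R A A A).symm.toLinearMap ∘ₗ lTensor A comul

lemma galoisMap_tmul (h k : A) : galoisMap R A (h ⊗ₜ k) = (h ⊗ₜ 1) * comul k := by
  simp only [galoisMap, coe_comp, Function.comp_apply, LinearEquiv.coe_coe, lTensor_tmul]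
  rw [← (ℛ R k).eq]
  simp [tmul_sum, map_sum, Finset.mul_sum]

end Bialgebra

variable {R A : Type*} [CommSemiring R] [Semiring A] [HopfAlgebra R A] {ι : Type*}

lemma sum_comul_mul_tmul_antipode {a : A} (𝓡 : Repr R a ι) :
    ∑ i ∈ 𝓡.index, comul (R := R) (𝓡.left i) * (1 ⊗ₜ antipode R (𝓡.right i)) = a ⊗ₜ 1 := by
  have coassoc := congr(lTensor A (mul' R A ∘ₗ lTensor A (antipode R))
    $(sum_tmul_tmul_eq 𝓡 (fun i ↦ ℛ R (𝓡.left i)) (fun i ↦ ℛ R (𝓡.right i))))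
  simp only [map_sum, lTensor_tmul, coe_comp, Function.comp_apply, mul'_apply,
    ← tmul_sum, sum_mul_antipode_eq_algebraMap_counit] at coassoc
  have counit_law := congr(lTensor A (Algebra.linearMap R A) $(sum_tmul_counit_eq 𝓡))
  simp only [map_sum, lTensor_tmul, Algebra.linearMap_apply, map_one] at counit_law
  calc _ = ∑ i ∈ 𝓡.index, ∑ j ∈ (ℛ R (𝓡.left i)).index,
        (ℛ R (𝓡.left i)).left j ⊗ₜ ((ℛ R (𝓡.left i)).right j * antipode R (𝓡.right i)) := by
        refine Finset.sum_congr rfl fun i _ ↦ ?_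
        simp only [← (ℛ R (𝓡.left i)).eq, Finset.sum_mul, Algebra.TensorProduct.tmul_mul_tmul,
          mul_one]
    _ = ∑ i ∈ 𝓡.index, 𝓡.left i ⊗ₜ algebraMap R A (counit (𝓡.right i)) := coassoc
    _ = a ⊗ₜ 1 := counit_law

lemma sum_antipode_tmul_one_mul_comul {a : A} (𝓡 : Repr R a ι) :
    ∑ i ∈ 𝓡.index, (antipode R (𝓡.left i) ⊗ₜ 1) * comul (R := R) (𝓡.right i) = 1 ⊗ₜ a := by
  have coassoc := congr((rTensor A (mul' R A ∘ₗ rTensor A (antipode R)) ∘ₗ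
      (TensorProduct.assoc R A A A).symm.toLinearMap)
    $(sum_tmul_tmul_eq 𝓡 (fun i ↦ ℛ R (𝓡.left i)) (fun i ↦ ℛ R (𝓡.right i))))
  simp only [map_sum, coe_comp, Function.comp_apply, LinearEquiv.coe_coe, assoc_symm_tmul,
    rTensor_tmul, mul'_apply, ← sum_tmul, sum_antipode_mul_eq_algebraMap_counit] at coassoc
  have counit_law := congr(rTensor A (Algebra.linearMap R A) $(sum_counit_tmul_eq 𝓡))
  simp only [map_sum, rTensor_tmul, Algebra.linearMap_apply, map_one] at counit_law
  calc _ = ∑ i ∈ 𝓡.index, ∑ j ∈ (ℛ R (𝓡.right i)).index,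
        (antipode R (𝓡.left i) * (ℛ R (𝓡.right i)).left j) ⊗ₜ (ℛ R (𝓡.right i)).right j := by
        refine Finset.sum_congr rfl fun i _ ↦ ?_
        simp only [← (ℛ R (𝓡.right i)).eq, Finset.mul_sum, Algebra.TensorProduct.tmul_mul_tmul,
          one_mul]
    _ = ∑ i ∈ 𝓡.index, algebraMap R A (counit (𝓡.left i)) ⊗ₜ 𝓡.right i := coassoc.symm
    _ = 1 ⊗ₜ a := counit_law

variable (R A) in
def galoisMapInv : A ⊗[R] A →ₗ[R] A ⊗[R] A :=
  rTensor A (mul' R A ∘ₗ lTensor A (antipode R)) ∘ₗ (TensorProduct.assoc R A A A).symm.toLinearMap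
    ∘ₗ lTensor A comul

lemma galoisMapInv_tmul (h k : A) :
    galoisMapInv R A (h ⊗ₜ k) = rTensor A (mulLeft R h ∘ₗ antipode R) (comul k) := by
  simp only [galoisMapInv, coe_comp, Function.comp_apply, LinearEquiv.coe_coe, lTensor_tmul]
  rw [← (ℛ R k).eq]
  simp [tmul_sum, map_sum]

lemma galoisMap_galoisMapInv (x : A ⊗[R] A) : galoisMap R A (galoisMapInv R A x) = x := by
  induction x using TensorProduct.induction_on with
  | zero => simp
  | add x y hx hy => simp only [map_add, hx, hy]
  | tmul h k =>
    let 𝓡 := ℛ R k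
    calc galoisMap R A (galoisMapInv R A (h ⊗ₜ k))
        = ∑ i ∈ 𝓡.index, galoisMap R A ((h * antipode R (𝓡.left i)) ⊗ₜ 𝓡.right i) := by
          rw [galoisMapInv_tmul, ← 𝓡.eq]
          simp only [map_sum, rTensor_tmul, coe_comp, Function.comp_apply, mulLeft_apply]
      _ = (h ⊗ₜ 1) * ∑ i ∈ 𝓡.index, (antipode R (𝓡.left i) ⊗ₜ 1) * comul (𝓡.right i) := by
          simp only [galoisMap_tmul, Finset.mul_sum, ← mul_assoc,
            Algebra.TensorProduct.tmul_mul_tmul, mul_one]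
      _ = h ⊗ₜ k := by
          rw [sum_antipode_tmul_one_mul_comul, Algebra.TensorProduct.tmul_mul_tmul, mul_one,
            one_mul]

def integralPairing (t : A →ₗ[R] R) : A ⊗[R] A →ₗ[R] R :=
  t ∘ₗ mul' R A ∘ₗ lTensor A (antipode R)

lemma integralPairing_comul {t : A →ₗ[R] R} (ht : t 1 = 1) (h : A) :
    integralPairing t (comul h) = counit h := by
  rw [integralPairing, comp_apply, comp_apply, mul_antipode_lTensor_comul_apply,
    Algebra.algebraMap_eq_smul_one, map_smul, ht, smul_eq_mul, mul_one]

lemma comulContractLeft_integralPairing_tmul (t : A →ₗ[R] R) (x y : A) :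
    comulContractLeft (integralPairing t) (x ⊗ₜ y) =
      TensorProduct.rid R A (lTensor A t (comul x * (1 ⊗ₜ antipode R y))) := by
  rw [comulContractLeft_tmul, ← (ℛ R x).eq]
  simp [map_sum, Finset.sum_mul, integralPairing]

lemma comulContractLeft_integralPairing_galoisMap (t : A →ₗ[R] R) (h k : A) :
    comulContractLeft (integralPairing t) (galoisMap R A (h ⊗ₜ k)) =
      TensorProduct.rid R A (lTensor A t (comul h)) * k := by
  let 𝓡 := ℛ R k
  calc comulContractLeft (integralPairing t) (galoisMap R A (h ⊗ₜ k))
      = ∑ i ∈ 𝓡.index, comulContractLeft (integralPairing t) ((h * 𝓡.left i) ⊗ₜ 𝓡.right i) := by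
        rw [galoisMap_tmul, ← 𝓡.eq]
        simp only [Finset.mul_sum, Algebra.TensorProduct.tmul_mul_tmul, one_mul, map_sum]
    _ = TensorProduct.rid R A (lTensor A t (comul h *
          ∑ i ∈ 𝓡.index, comul (R := R) (𝓡.left i) * (1 ⊗ₜ antipode R (𝓡.right i)))) := by
        simp only [comulContractLeft_integralPairing_tmul, Bialgebra.comul_mul, mul_assoc,
          Finset.mul_sum, map_sum]
    _ = TensorProduct.rid R A (lTensor A t (comul h)) * k := by
        rw [sum_comul_mul_tmul_antipode, rid_lTensor_mul_tmul_one]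

lemma comulContractLeft_integralPairing {t : A →ₗ[R] R}
    (ht : ∀ h : A, TensorProduct.rid R A (lTensor A t (comul h)) = t h • (1 : A)) :
    comulContractLeft (integralPairing t) =
      (TensorProduct.lid R A).toLinearMap ∘ₗ rTensor A t ∘ₗ galoisMapInv R A := by
  have on_galoisMap : comulContractLeft (integralPairing t) ∘ₗ galoisMap R A =
      (TensorProduct.lid R A).toLinearMap ∘ₗ rTensor A t := by
    ext h k
    simp [comulContractLeft_integralPairing_galoisMap, ht]
  refine LinearMap.ext fun x ↦ ?_
  conv_lhs => rw [← galoisMap_galoisMapInv (R := R) (A := A) x]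
  exact congr($on_galoisMap (galoisMapInv R A x))

lemma comulContractRight_integralPairing (t : A →ₗ[R] R) :
    comulContractRight (integralPairing t) =
      (TensorProduct.lid R A).toLinearMap ∘ₗ rTensor A t ∘ₗ galoisMapInv R A := by
  refine TensorProduct.ext' fun h k ↦ ?_
  rw [comulContractRight_tmul, comp_apply, comp_apply, galoisMapInv_tmul, ← rTensor_comp_apply]
  rfl

lemma comulContractLeft_integralPairing_eq_comulContractRight {t : A →ₗ[R] R}
    (ht : ∀ h : A, TensorProduct.rid R A (lTensor A t (comul h)) = t h • (1 : A)) :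
    comulContractLeft (integralPairing t) = comulContractRight (integralPairing t) := by
  rw [comulContractLeft_integralPairing ht, comulContractRight_integralPairing]

end HopfAlgebra

theorem total_left_integral_iff_coseparable
    (S : Type*) [CommSemiring S] (H : Type*) [Semiring H] [HopfAlgebra S H] :
    (∃ t : H →ₗ[S] S,
        (∀ h : H, (TensorProduct.rid S H)
            (LinearMap.lTensor H t (Coalgebra.comul h)) = t h • (1 : H)) ∧
        t 1 = 1) ↔
      (∃ δ : H ⊗[S] H →ₗ[S] S,
        (∀ h : H, δ (Coalgebra.comul h) = Coalgebra.counit (R := S) h) ∧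
        (∀ h k : H,
          -- `Σ h₁ · δ(h₂ ⊗ k)`
          (TensorProduct.rid S H)
            (LinearMap.lTensor H (δ ∘ₗ (TensorProduct.mk S H H).flip k)
              (Coalgebra.comul h)) =
          -- `Σ δ(h ⊗ k₁) · k₂`
          (TensorProduct.lid S H)
            (LinearMap.rTensor H (δ ∘ₗ TensorProduct.mk S H H h)
              (Coalgebra.comul k)))) := by
  constructor
  · rintro ⟨t, ht, ht_one⟩
    refine ⟨integralPairing t, integralPairing_comul ht_one, fun h k ↦ ?_⟩
    rw [← comulContractLeft_tmul, ← comulContractRight_tmul,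
      comulContractLeft_integralPairing_eq_comulContractRight ht]
  · rintro ⟨δ, hδ_comul, hδ_bicolinear⟩
    have comul_one : comul (R := S) (1 : H) = 1 ⊗ₜ 1 := Bialgebra.comul_one
    refine ⟨δ ∘ₗ (TensorProduct.mk S H H).flip 1, fun h ↦ ?_, ?_⟩
    · simp [hδ_bicolinear h 1, comul_one]
    · simpa [comul_one] using hδ_comul 1
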